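/- The map f : H³ → B³ defined on quaternions by f(w) = (w − j)(w + j)⁻¹ j, where H³ = {a + bi + cj : c > 0} and B³ = {a + bi + cj : a² + b² + c² < 1}, is a well-defined bijection from upper half-space to the open unit ball (in the span of 1, i, j in the quaternions), sending j to 0. -/

import Mathlib

/-! Write `ι q = 2 j q⁻¹ j`. Then `f w = j - ι (w + j)`, and `ι` is an involution (`2` is central), so
`f` is inverted by `z ↦ ι (j - z) - j` away from `w = -j` and `z = j`. Since `‖j‖ = 1`,
`‖f w‖ = ‖w - j‖ / ‖w + j‖`, which is `< 1` exactly when `⟪w, j⟫ = w.imJ > 0`; and `ι` scales the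
`k`-component by `-2 / ‖q‖²`, so `f w` lies in the span of `1, i, j` iff `w` does. -/

noncomputable section

/-- The quaternion j. -/
def jq : Quaternion ℝ := ⟨0, 0, 1, 0⟩

/-- Upper half-space: quaternions a + bi + cj with c > 0. -/
def upperHalfSpace : Set (Quaternion ℝ) := {q | q.imK = 0 ∧ 0 < q.imJ}

/-- The open unit ball in the span of 1, i, j. -/
def unitBall3 : Set (Quaternion ℝ) := {q | q.imK = 0 ∧ ‖q‖ < 1}

/-- The Cayley transform f(w) = (w − j)(w + j)⁻¹ j. -/
def cayley (w : Quaternion ℝ) : Quaternion ℝ := (w - jq) * (w + jq)⁻¹ * jq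

open Quaternion

theorem norm_sub_lt_norm_add_iff_real_inner_pos {F : Type*} [NormedAddCommGroup F]
    [InnerProductSpace ℝ F] (x y : F) : ‖x - y‖ < ‖x + y‖ ↔ 0 < inner ℝ x y := by
  rw [← sq_lt_sq₀ (norm_nonneg _) (norm_nonneg _), norm_sub_sq_real, norm_add_sq_real]
  constructor <;> intro h <;> linarith

theorem Quaternion.imK_inv {R : Type*} [Field R] [LinearOrder R] [IsStrictOrderedRing R]
    (q : ℍ[R]) : q⁻¹.imK = -q.imK / normSq q := by
  rw [inv_def, imK_smul, imK_star, smul_eq_mul, div_eq_inv_mul]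

instance : CharZero ℍ :=
  charZero_of_injective_algebraMap (algebraMap ℝ ℍ).injective

section DivisionRing

variable {D : Type*} [DivisionRing D] {j : D}

theorem sub_mul_inv_add_mul_eq {w : D} (hw : w + j ≠ 0) :
    (w - j) * (w + j)⁻¹ * j = j - 2 * (j * (w + j)⁻¹ * j) := by
  rw [show w - j = w + j - 2 * j by noncomm_ring, sub_mul, mul_inv_cancel₀ hw, sub_mul, one_mul,
    mul_assoc 2, mul_assoc 2]

theorem two_mul_mul_inv_mul_involutive [NeZero (2 : D)] (hj : j ≠ 0) :
    Function.Involutive fun x : D => 2 * (j * x⁻¹ * j) := by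
  intro x
  dsimp only
  rw [(Commute.ofNat_left 2 _).mul_inv, ← mul_assoc j 2⁻¹, ← (Commute.ofNat_left 2 j).inv_left₀.eq]
  simp [mul_assoc, hj, mul_inv_cancel_left₀ (two_ne_zero' D)]

end DivisionRing

@[simp] theorem re_jq : jq.re = 0 := rfl
@[simp] theorem imI_jq : jq.imI = 0 := rfl
@[simp] theorem imJ_jq : jq.imJ = 1 := rfl
@[simp] theorem imK_jq : jq.imK = 0 := rfl

theorem norm_jq : ‖jq‖ = 1 := by
  rw [norm_eq_sqrt_real_inner, inner_self, normSq_def']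
  simp

theorem jq_ne_zero : jq ≠ 0 :=
  norm_ne_zero_iff.1 (by simp [norm_jq])

theorem inner_jq (w : ℍ) : inner ℝ w jq = w.imJ := by
  simp [inner_def, re_mul]

theorem imK_jq_mul_mul_jq (q : ℍ) : (jq * q * jq).imK = q.imK := by
  simp [re_mul, imI_mul, imJ_mul, imK_mul]

def jqInversion (q : ℍ) : ℍ := 2 * (jq * q⁻¹ * jq)

theorem jqInversion_involutive : Function.Involutive jqInversion :=
  two_mul_mul_inv_mul_involutive jq_ne_zero

theorem jqInversion_ne_zero {q : ℍ} (hq : q ≠ 0) : jqInversion q ≠ 0 := by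
  simp [jqInversion, hq, jq_ne_zero]

theorem imK_jqInversion (q : ℍ) : (jqInversion q).imK = -2 * q.imK / normSq q := by
  rw [jqInversion, two_mul, imK_add, imK_jq_mul_mul_jq, imK_inv]
  ring

theorem cayley_eq {w : ℍ} (hw : w + jq ≠ 0) : cayley w = jq - jqInversion (w + jq) :=
  sub_mul_inv_add_mul_eq hw

theorem imK_cayley_eq_zero_iff {w : ℍ} (hw : w + jq ≠ 0) : (cayley w).imK = 0 ↔ w.imK = 0 := by
  simp [cayley_eq hw, imK_jqInversion, hw]

theorem norm_cayley (w : ℍ) : ‖cayley w‖ = ‖w - jq‖ / ‖w + jq‖ := by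
  simp [cayley, norm_jq, div_eq_mul_inv]

theorem norm_cayley_lt_one_iff {w : ℍ} (hw : w + jq ≠ 0) : ‖cayley w‖ < 1 ↔ 0 < w.imJ := by
  rw [norm_cayley, div_lt_one (norm_pos_iff.2 hw), norm_sub_lt_norm_add_iff_real_inner_pos,
    inner_jq]

theorem cayley_mem_unitBall3_iff {w : ℍ} (hw : w + jq ≠ 0) :
    cayley w ∈ unitBall3 ↔ w ∈ upperHalfSpace :=
  and_congr (imK_cayley_eq_zero_iff hw) (norm_cayley_lt_one_iff hw)

def cayleyInv (z : ℍ) : ℍ := jqInversion (jq - z) - jq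

theorem cayleyInv_add_jq_ne_zero {z : ℍ} (hz : z ≠ jq) : cayleyInv z + jq ≠ 0 := by
  rw [cayleyInv, sub_add_cancel]
  exact jqInversion_ne_zero (sub_ne_zero.2 hz.symm)

theorem cayleyInv_cayley {w : ℍ} (hw : w + jq ≠ 0) : cayleyInv (cayley w) = w := by
  rw [cayleyInv, cayley_eq hw, sub_sub_cancel, jqInversion_involutive, add_sub_cancel_right]

theorem cayley_cayleyInv {z : ℍ} (hz : z ≠ jq) : cayley (cayleyInv z) = z := by
  rw [cayley_eq (cayleyInv_add_jq_ne_zero hz), cayleyInv, sub_add_cancel, jqInversion_involutive,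
    sub_sub_cancel]

theorem add_jq_ne_zero_of_mem_upperHalfSpace {w : ℍ} (hw : w ∈ upperHalfSpace) : w + jq ≠ 0 :=
  ne_of_apply_ne QuaternionAlgebra.imJ (by simp only [imJ_add, imJ_jq, imJ_zero]; linarith [hw.2])

theorem ne_jq_of_mem_unitBall3 {z : ℍ} (hz : z ∈ unitBall3) : z ≠ jq := by
  rintro rfl
  simpa [norm_jq] using hz.2

/-- The map f(w) = (w − j)(w + j)⁻¹ j is well defined (w + j is invertible on
H³) and is a bijection from upper half-space onto the open unit ball in the
span of 1, i, j, sending j to 0. -/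
theorem cayley_bijOn :
    (∀ w ∈ upperHalfSpace, w + jq ≠ 0) ∧
    Set.BijOn cayley upperHalfSpace unitBall3 ∧
    cayley jq = 0 := by
  refine ⟨fun w => add_jq_ne_zero_of_mem_upperHalfSpace, ?_, by simp [cayley]⟩
  refine Set.InvOn.bijOn (f' := cayleyInv) ⟨?_, ?_⟩ ?_ ?_
  · exact fun w hw => cayleyInv_cayley (add_jq_ne_zero_of_mem_upperHalfSpace hw)
  · exact fun z hz => cayley_cayleyInv (ne_jq_of_mem_unitBall3 hz)
  · exact fun w hw => (cayley_mem_unitBall3_iff (add_jq_ne_zero_of_mem_upperHalfSpace hw)).2 hw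
  · intro z hz
    have hzj := ne_jq_of_mem_unitBall3 hz
    rw [← cayley_cayleyInv hzj] at hz
    exact (cayley_mem_unitBall3_iff (cayleyInv_add_jq_ne_zero hzj)).1 hz
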